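/- arXiv:1706.08559 — 3 statements merged into one kernel-verified Lean document; each statement's English description precedes it below -/
import Mathlib

section
/- Let I be a pseudomonomial ideal in canonical form in F_2[x_1,...,x_n] and p a pseudomonomial prime. Then I ⊆ p if and only if every generator in the canonical form of I is divisible by some generator of p. -/
open MvPolynomial

/-- The pseudomonomial with data `(σ, τ)`: `∏_{i∈σ} x_i · ∏_{j∈τ} (1 - x_j)`. -/
noncomputable def psm {n : ℕ} (σ τ : Finset (Fin n)) :
    MvPolynomial (Fin n) (ZMod 2) :=
  (∏ i ∈ σ, X i) * ∏ j ∈ τ, (1 - X j)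

/-- A pseudomonomial: a product `∏_{i∈σ} x_i ∏_{j∈τ}(1 - x_j)` with `σ, τ` disjoint. -/
def IsPseudomonomial {n : ℕ} (f : MvPolynomial (Fin n) (ZMod 2)) : Prop :=
  ∃ σ τ : Finset (Fin n), Disjoint σ τ ∧ f = psm σ τ

/-- `f` is a minimal pseudomonomial of `I`: `f` is a pseudomonomial lying in `I`
and no proper divisor of `f` lies in `I`. -/
def IsMinimalPseudomonomial {n : ℕ} (I : Ideal (MvPolynomial (Fin n) (ZMod 2)))
    (f : MvPolynomial (Fin n) (ZMod 2)) : Prop :=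
  IsPseudomonomial f ∧ f ∈ I ∧
    ∀ g : MvPolynomial (Fin n) (ZMod 2), g ∣ f → ¬ f ∣ g → g ∉ I

/-!
A generator of `I` divisible by a generator of `p` lies in `p`. Conversely, if a generator
`∏_{i∈σ} x_i ∏_{j∈τ} (1 - x_j)` of `I` has no factor `x_i` with `i ∈ A` and no factor
`1 - x_j` with `j ∈ B`, evaluate at the point that is `1` exactly on `B ∪ σ`: it is a zero of
every generator of `p`, but the generator of `I` takes the value `1` there, so it is not in `p`.
-/

section Evaluation

variable {R ι : Type*} [CommRing R]

lemma span_X_one_sub_X_le_ker_eval {A B : Set ι} {c : ι → R}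
    (hA : ∀ i ∈ A, c i = 0) (hB : ∀ j ∈ B, c j = 1) :
    Ideal.span ((fun i => X i) '' A ∪ (fun j => 1 - X j) '' B) ≤ RingHom.ker (eval c) := by
  rw [Ideal.span_le]
  rintro f (⟨i, hi, rfl⟩ | ⟨j, hj, rfl⟩)
  · simp [RingHom.mem_ker, hA i hi]
  · simp [RingHom.mem_ker, hB j hj]

lemma eval_prod_X_mul_prod_one_sub_X {s t : Finset ι} {c : ι → R}
    (hs : ∀ i ∈ s, c i = 1) (ht : ∀ j ∈ t, c j = 0) :
    eval c ((∏ i ∈ s, X i) * ∏ j ∈ t, (1 - X j)) = 1 := by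
  simp only [map_mul, map_prod, map_sub, map_one, eval_X]
  rw [Finset.prod_eq_one hs, Finset.prod_eq_one fun j hj => by rw [ht j hj, sub_zero], mul_one]

lemma prod_X_mul_prod_one_sub_X_notMem_span [Nontrivial R] {s t : Finset ι} {A B : Set ι}
    (hst : Disjoint s t) (hAB : Disjoint A B)
    (hsA : ∀ i ∈ s, i ∉ A) (htB : ∀ j ∈ t, j ∉ B) :
    (∏ i ∈ s, X i) * ∏ j ∈ t, (1 - X j : MvPolynomial ι R) ∉
      Ideal.span ((fun i => X i) '' A ∪ (fun j => 1 - X j) '' B) := by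
  classical
  let c : ι → R := fun i => if i ∈ B ∨ i ∈ s then 1 else 0
  have hA : ∀ i ∈ A, c i = 0 := fun i hi => by
    have his : i ∉ s := fun his => hsA i his hi
    simp [c, Set.disjoint_left.mp hAB hi, his]
  have hB : ∀ j ∈ B, c j = 1 := fun j hj => by simp [c, hj]
  have hs : ∀ i ∈ s, c i = 1 := fun i hi => by simp [c, hi]
  have ht : ∀ j ∈ t, c j = 0 := fun j hj => by
    simp [c, Finset.disjoint_right.mp hst hj, htB j hj]
  intro hmem
  have hzero : eval c ((∏ i ∈ s, X i) * ∏ j ∈ t, (1 - X j)) = 0 :=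
    span_X_one_sub_X_le_ker_eval hA hB hmem
  exact one_ne_zero ((eval_prod_X_mul_prod_one_sub_X hs ht).symm.trans hzero)

end Evaluation

section Pseudomonomial

variable {n : ℕ}

lemma X_dvd_psm {σ τ : Finset (Fin n)} {i : Fin n} (hi : i ∈ σ) : X i ∣ psm σ τ :=
  dvd_mul_of_dvd_left (Finset.dvd_prod_of_mem _ hi) _

lemma one_sub_X_dvd_psm {σ τ : Finset (Fin n)} {j : Fin n} (hj : j ∈ τ) :
    (1 - X j) ∣ psm σ τ :=
  dvd_mul_of_dvd_right (Finset.dvd_prod_of_mem _ hj) _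

lemma psm_mem_span_iff {σ τ : Finset (Fin n)} {A B : Set (Fin n)}
    (hστ : Disjoint σ τ) (hAB : Disjoint A B) :
    psm σ τ ∈ Ideal.span ((fun i => X i) '' A ∪ (fun j => 1 - X j) '' B) ↔
      (∃ i ∈ A, X i ∣ psm σ τ) ∨ (∃ j ∈ B, (1 - X j) ∣ psm σ τ) := by
  constructor
  · intro hmem
    by_contra! h
    exact prod_X_mul_prod_one_sub_X_notMem_span hστ hAB
      (fun i hi hiA => h.1 i hiA (X_dvd_psm hi))
      (fun j hj hjB => h.2 j hjB (one_sub_X_dvd_psm hj)) hmem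
  · rintro (⟨i, hi, hdvd⟩ | ⟨j, hj, hdvd⟩)
    · exact Ideal.mem_of_dvd _ hdvd (Ideal.subset_span (Or.inl ⟨i, hi, rfl⟩))
    · exact Ideal.mem_of_dvd _ hdvd (Ideal.subset_span (Or.inr ⟨j, hj, rfl⟩))

end Pseudomonomial

theorem pseudomonomial_ideal_le_prime_iff_general {n ℓ : ℕ}
    (σ τ : Fin ℓ → Finset (Fin n)) (hdisj : ∀ k, Disjoint (σ k) (τ k))
    (I : Ideal (MvPolynomial (Fin n) (ZMod 2)))
    (hI : I = Ideal.span (Set.range fun k => psm (σ k) (τ k)))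
    (A B : Set (Fin n)) (hAB : Disjoint A B)
    (p : Ideal (MvPolynomial (Fin n) (ZMod 2)))
    (hp : p = Ideal.span ((fun i => X i) '' A ∪ (fun j => 1 - X j) '' B)) :
    I ≤ p ↔
      ∀ k, (∃ i ∈ A, X i ∣ psm (σ k) (τ k)) ∨
        (∃ j ∈ B, (1 - X j) ∣ psm (σ k) (τ k)) := by
  subst hI hp
  rw [Ideal.span_le, Set.range_subset_iff]
  exact forall_congr' fun k => psm_mem_span_iff (hdisj k) hAB

theorem pseudomonomial_ideal_le_prime_iff {n ℓ : ℕ}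
    (σ τ : Fin ℓ → Finset (Fin n)) (hdisj : ∀ k, Disjoint (σ k) (τ k))
    (I : Ideal (MvPolynomial (Fin n) (ZMod 2)))
    (hI : I = Ideal.span (Set.range fun k => psm (σ k) (τ k)))
    (hCF : ∀ f, IsMinimalPseudomonomial I f ↔ ∃ k, f = psm (σ k) (τ k))
    (A B : Set (Fin n)) (hAB : Disjoint A B)
    (p : Ideal (MvPolynomial (Fin n) (ZMod 2)))
    (hp : p = Ideal.span ((fun i => X i) '' A ∪ (fun j => 1 - X j) '' B)) :
    I ≤ p ↔
      ∀ k, (∃ i ∈ A, X i ∣ psm (σ k) (τ k)) ∨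
        (∃ j ∈ B, (1 - X j) ∣ psm (σ k) (τ k)) :=
  pseudomonomial_ideal_le_prime_iff_general σ τ hdisj I hI A B hAB p hp
end

section
/- Let C ⊆ {0,1}^n be a neural code and J_C its neural ideal in R = F_2[x_1,...,x_n]. Let D = ⟨x_i + y_i − 1 : i ∈ [n]⟩ ⊆ S = F_2[x_1,...,x_n,y_1,...,y_n]. Then S/(P(J_C) + D) ≅ R/J_C as rings. -/
/-! Depolarization `φ : S → R`, `x_i ↦ x_i`, `y_i ↦ 1 - x_i`, is surjective with kernel `D`, so
`S ⧸ (P(J_C) + D) ≃ R ⧸ φ(P(J_C))`. Since `φ` sends the polarization of a pseudomonomial back to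
the pseudomonomial, `φ(P(J_C))` is generated by the minimal pseudomonomials of `J_C`, and this is
all of `J_C`: every pseudomonomial of `J_C` is divisible by a minimal one. Indeed, `x_i` and
`1 - x_i` are prime, so the divisors of a pseudomonomial are, up to units, its
sub-pseudomonomials; one of them lying in `J_C` with inclusion-minimal support is minimal. -/

open MvPolynomial

/-- The polarization of the pseudomonomial with data `(σ, τ)` in
`S = F₂[x_1,…,x_n,y_1,…,y_n]`, where `x_i = X (Sum.inl i)`, `y_j = X (Sum.inr j)`. -/
noncomputable def polz {n : ℕ} (σ τ : Finset (Fin n)) :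
    MvPolynomial (Fin n ⊕ Fin n) (ZMod 2) :=
  (∏ i ∈ σ, X (Sum.inl i)) * ∏ j ∈ τ, X (Sum.inr j)

/-- The indicator pseudomonomial of a word `c ∈ {0,1}ⁿ`:
`∏_{c_i = 1} x_i · ∏_{c_j = 0} (1 - x_j)`. -/
noncomputable def indic {n : ℕ} (c : Fin n → ZMod 2) :
    MvPolynomial (Fin n) (ZMod 2) :=
  ∏ i : Fin n, (if c i = 1 then X i else 1 - X i)

/-- The neural ideal of a code `C ⊆ {0,1}ⁿ`. -/
noncomputable def neuralIdeal {n : ℕ} (C : Set (Fin n → ZMod 2)) :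
    Ideal (MvPolynomial (Fin n) (ZMod 2)) :=
  Ideal.span {f | ∃ c ∉ C, f = indic c}

/-- The polarization of the neural ideal: the squarefree monomial ideal generated by
the polarizations of the minimal pseudomonomials of `J_C`. -/
noncomputable def polarNeuralIdeal {n : ℕ} (C : Set (Fin n → ZMod 2)) :
    Ideal (MvPolynomial (Fin n ⊕ Fin n) (ZMod 2)) :=
  Ideal.span {m | ∃ σ τ : Finset (Fin n), Disjoint σ τ ∧
    IsMinimalPseudomonomial (neuralIdeal C) (psm σ τ) ∧ m = polz σ τ}


namespace MvPolynomial

theorem sub_mem_of_forall_X_sub_mem {σ R : Type*} [CommRing R]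
    (f : MvPolynomial σ R →ₐ[R] MvPolynomial σ R) {I : Ideal (MvPolynomial σ R)}
    (h : ∀ i, X i - f (X i) ∈ I) (p : MvPolynomial σ R) : p - f p ∈ I := by
  have hf : (Ideal.Quotient.mkₐ R I).comp f = Ideal.Quotient.mkₐ R I :=
    algHom_ext fun i => (Ideal.Quotient.eq.mpr (h i)).symm
  exact Ideal.Quotient.eq.mp (DFunLike.congr_fun hf p).symm

theorem ker_aeval_sumElim_X {σ τ R : Type*} [CommRing R] (g : τ → MvPolynomial σ R) :
    RingHom.ker (aeval (Sum.elim X g) : MvPolynomial (σ ⊕ τ) R →ₐ[R] MvPolynomial σ R) =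
      Ideal.span (Set.range fun j => X (Sum.inr j) - rename Sum.inl (g j)) := by
  have aeval_rename_inl (p : MvPolynomial σ R) :
      aeval (Sum.elim X g) (rename Sum.inl p) = p := by
    rw [aeval_rename, Sum.elim_comp_inl, aeval_X_left_apply]
  apply le_antisymm
  · intro p hp
    have key := sub_mem_of_forall_X_sub_mem ((rename Sum.inl).comp (aeval (Sum.elim X g)))
      (I := Ideal.span (Set.range fun j => X (Sum.inr j) - rename Sum.inl (g j)))
      (fun i => by
        cases i with
        | inl i => simp
        | inr j => exact Ideal.subset_span ⟨j, by simp⟩) p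
    rwa [AlgHom.comp_apply, RingHom.mem_ker.mp hp, map_zero, sub_zero] at key
  · rw [Ideal.span_le]
    rintro _ ⟨j, rfl⟩
    rw [SetLike.mem_coe, RingHom.mem_ker, map_sub, aeval_X, Sum.elim_inr, aeval_rename_inl,
      sub_self]

theorem aeval_sumElim_X_surjective {σ τ R : Type*} [CommRing R] (g : τ → MvPolynomial σ R) :
    Function.Surjective (aeval (Sum.elim X g) : MvPolynomial (σ ⊕ τ) R →ₐ[R] MvPolynomial σ R) :=
  fun p => ⟨rename Sum.inl p, by rw [aeval_rename, Sum.elim_comp_inl, aeval_X_left_apply]⟩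

end MvPolynomial

noncomputable def Ideal.quotientEquivQuotientMapOfSurjective {R S F : Type*} [CommRing R]
    [CommRing S] [FunLike F R S] [RingHomClass F R S] {f : F} (hf : Function.Surjective f)
    {I : Ideal R} (hI : RingHom.ker f ≤ I) :
    R ⧸ I ≃+* S ⧸ I.map f :=
  (Ideal.quotEquivOfEq (by
      rw [← RingHom.comap_ker, Ideal.mk_ker, Ideal.comap_coe, Ideal.comap_map_of_surjective f hf,
        ← RingHom.ker_eq_comap_bot, sup_eq_left.mpr hI])).trans
    (RingHom.quotientKerEquivOfSurjective (f := (Ideal.Quotient.mk (I.map f)).comp (f : R →+* S))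
      (Ideal.Quotient.mk_surjective.comp hf))

theorem exists_subset_associated_prod_of_dvd_prod {M ι : Type*} [CommMonoidWithZero M]
    [IsCancelMulZero M] [DecidableEq ι] {p : ι → M} {s : Finset ι} (hp : ∀ i ∈ s, Prime (p i))
    {g : M} (hg : g ∣ ∏ i ∈ s, p i) : ∃ t ⊆ s, Associated g (∏ i ∈ t, p i) := by
  induction s using Finset.induction_on generalizing g with
  | empty => exact ⟨∅, subset_rfl, by simpa [associated_one_iff_isUnit] using isUnit_of_dvd_one hg⟩
  | insert a s ha ih =>
    rw [Finset.prod_insert ha] at hg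
    have hpa := hp a (Finset.mem_insert_self a s)
    have hps := fun i hi => hp i (Finset.mem_insert_of_mem hi)
    rcases hpa.left_dvd_or_dvd_right_of_dvd_mul hg with ⟨g', rfl⟩ | hgs
    · obtain ⟨t, hts, hg't⟩ := ih hps ((mul_dvd_mul_iff_left hpa.ne_zero).mp hg)
      refine ⟨insert a t, Finset.insert_subset_insert a hts, ?_⟩
      rw [Finset.prod_insert fun hat => ha (hts hat)]
      exact hg't.mul_left (p a)
    · obtain ⟨t, hts, hgt⟩ := ih hps hgs
      exact ⟨t, hts.trans (Finset.subset_insert a s), hgt⟩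

theorem prime_one_sub_X {σ R : Type*} [CommRing R] [IsDomain R] (i : σ) :
    Prime (1 - X i : MvPolynomial σ R) := by
  let e : MvPolynomial σ R ≃ₐ[R] MvPolynomial σ R :=
    AlgEquiv.ofAlgHom (aeval fun j => 1 - X j) (aeval fun j => 1 - X j)
      (algHom_ext fun j => by simp) (algHom_ext fun j => by simp)
  simpa [e] using (MulEquiv.prime_iff e).mpr (X_prime (i := i))

noncomputable def depolarization (n : ℕ) :
    MvPolynomial (Fin n ⊕ Fin n) (ZMod 2) →ₐ[ZMod 2] MvPolynomial (Fin n) (ZMod 2) :=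
  aeval (Sum.elim X fun i => 1 - X i)

section Pseudomonomial

variable {n : ℕ}

theorem polz_eq_prod (σ τ : Finset (Fin n)) : polz σ τ = ∏ u ∈ σ.disjSum τ, X u := by
  rw [Finset.prod_disjSum, polz]

theorem psm_eq_prod (σ τ : Finset (Fin n)) :
    psm σ τ = ∏ u ∈ σ.disjSum τ, depolarization n (X u) := by
  simp [Finset.prod_disjSum, psm, depolarization]

theorem depolarization_polz (σ τ : Finset (Fin n)) : depolarization n (polz σ τ) = psm σ τ := by
  rw [polz_eq_prod, map_prod, psm_eq_prod]

theorem psm_dvd_psm {σ' τ' σ τ : Finset (Fin n)} (hσ : σ' ⊆ σ) (hτ : τ' ⊆ τ) :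
    psm σ' τ' ∣ psm σ τ :=
  mul_dvd_mul (Finset.prod_dvd_prod_of_subset _ _ _ hσ) (Finset.prod_dvd_prod_of_subset _ _ _ hτ)

theorem exists_subset_associated_psm_of_dvd {σ τ : Finset (Fin n)}
    {g : MvPolynomial (Fin n) (ZMod 2)} (hg : g ∣ psm σ τ) :
    ∃ u ⊆ σ.disjSum τ, Associated g (psm u.toLeft u.toRight) := by
  have hprime (u : Fin n ⊕ Fin n) : Prime (depolarization n (X u)) := by
    cases u <;> simp [depolarization, X_prime, prime_one_sub_X]
  rw [psm_eq_prod] at hg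
  obtain ⟨u, hu, hgu⟩ := exists_subset_associated_prod_of_dvd_prod (fun u _ => hprime u) hg
  exact ⟨u, hu, by rwa [psm_eq_prod, Finset.toLeft_disjSum_toRight]⟩

theorem exists_isMinimalPseudomonomial_of_psm_mem {I : Ideal (MvPolynomial (Fin n) (ZMod 2))}
    {σ τ : Finset (Fin n)} (hστ : Disjoint σ τ) (hI : psm σ τ ∈ I) :
    ∃ σ' ⊆ σ, ∃ τ' ⊆ τ, IsMinimalPseudomonomial I (psm σ' τ') := by
  obtain ⟨u, hu, hmem, hmin⟩ := exists_minimal_le_of_wellFoundedLT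
    (fun u : Finset (Fin n ⊕ Fin n) => psm u.toLeft u.toRight ∈ I) (σ.disjSum τ) (by simpa)
  obtain ⟨hσ, hτ⟩ := Finset.subset_disjSum.mp hu
  refine ⟨u.toLeft, hσ, u.toRight, hτ, ⟨_, _, hστ.mono hσ hτ, rfl⟩, hmem, ?_⟩
  intro g hg hndvd hgI
  obtain ⟨v, hvu, hgv⟩ := exists_subset_associated_psm_of_dvd hg
  rw [Finset.toLeft_disjSum_toRight] at hvu
  have hv : v = u := le_antisymm hvu (hmin (I.mem_of_dvd hgv.dvd hgI) hvu)
  exact hndvd (hv ▸ hgv.symm.dvd)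

theorem indic_eq_psm (c : Fin n → ZMod 2) :
    indic c = psm {i | c i = 1} {i | c i ≠ 1} := by
  rw [indic, psm, Finset.prod_ite]

theorem map_depolarization_polarNeuralIdeal (C : Set (Fin n → ZMod 2)) :
    (polarNeuralIdeal C).map (depolarization n) = neuralIdeal C := by
  rw [polarNeuralIdeal, Ideal.map_span]
  apply le_antisymm
  · rw [Ideal.span_le]
    rintro _ ⟨_, ⟨σ, τ, -, hmin, rfl⟩, rfl⟩
    rw [depolarization_polz]
    exact hmin.2.1
  · rw [neuralIdeal, Ideal.span_le]
    rintro _ ⟨c, hc, rfl⟩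
    have hdisj : Disjoint ({i | c i = 1} : Finset (Fin n)) ({i | c i ≠ 1} : Finset (Fin n)) :=
      Finset.disjoint_filter_filter_not _ _ _
    rw [indic_eq_psm]
    obtain ⟨σ, hσ, τ, hτ, hmin⟩ := exists_isMinimalPseudomonomial_of_psm_mem (I := neuralIdeal C)
      hdisj (Ideal.subset_span ⟨c, hc, (indic_eq_psm c).symm⟩)
    exact Ideal.mem_of_dvd _ (psm_dvd_psm hσ hτ) (Ideal.subset_span
      ⟨_, ⟨σ, τ, hdisj.mono hσ hτ, hmin, rfl⟩, depolarization_polz σ τ⟩)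

theorem ker_depolarization :
    RingHom.ker (depolarization n) = Ideal.span (Set.range fun i : Fin n =>
      (X (Sum.inl i) + X (Sum.inr i) - 1 : MvPolynomial (Fin n ⊕ Fin n) (ZMod 2))) := by
  rw [depolarization, ker_aeval_sumElim_X]
  congr! 3 with i
  simp only [map_sub, map_one, rename_X]
  ring

end Pseudomonomial

theorem depolarization_quotient_iso {n : ℕ} (C : Set (Fin n → ZMod 2)) :
    Nonempty
      ((MvPolynomial (Fin n ⊕ Fin n) (ZMod 2) ⧸
          (polarNeuralIdeal C +
            Ideal.span (Set.range fun i : Fin n =>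
              (X (Sum.inl i) + X (Sum.inr i) - 1 :
                MvPolynomial (Fin n ⊕ Fin n) (ZMod 2))))) ≃+*
        (MvPolynomial (Fin n) (ZMod 2) ⧸ neuralIdeal C)) := by
  rw [← ker_depolarization]
  have hmap : (polarNeuralIdeal C + RingHom.ker (depolarization n)).map (depolarization n) =
      neuralIdeal C := by
    rw [Submodule.add_eq_sup, Ideal.map_sup, (Ideal.map_eq_bot_iff_le_ker _).mpr le_rfl,
      sup_bot_eq, map_depolarization_polarNeuralIdeal]
  exact ⟨(Ideal.quotientEquivQuotientMapOfSurjective (aeval_sumElim_X_surjective _) le_sup_right).trans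
    (Ideal.quotEquivOfEq hmap)⟩
end

section
/- Let C ⊆ {0,1}^n and α ∈ {0,1,*}^n. Then the neural ideal J_C is contained in the pseudomonomial prime p_α if and only if the interval V_α is contained in C. -/
open MvPolynomial

/-- The interval associated to `α ∈ {0,1,*}ⁿ` (`none` plays the role of `*`):
codewords agreeing with `α` at all non-`*` coordinates. -/
def intervalOf {n : ℕ} (α : Fin n → Option (ZMod 2)) : Set (Fin n → ZMod 2) :=
  {c | ∀ i a, α i = some a → c i = a}

/-- The pseudomonomial prime associated to `α ∈ {0,1,*}ⁿ`:
generated by the `x_i` with `α_i = 0` and the `1 - x_i` with `α_i = 1`. -/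
noncomputable def psmPrime {n : ℕ} (α : Fin n → Option (ZMod 2)) :
    Ideal (MvPolynomial (Fin n) (ZMod 2)) :=
  Ideal.span ({f | ∃ i, α i = some 0 ∧ f = X i} ∪
    {f | ∃ i, α i = some 1 ∧ f = 1 - X i})

/-! Evaluation at a word `c ∈ V_α` kills every generator of `p_α` but sends the indicator of `c`
to `1`. Conversely, if `c ∉ V_α` then `c` disagrees with `α` at some non-`*` coordinate `i`, and
the `i`-th factor of the indicator of `c` is then a generator of `p_α`. -/

theorem eq_zero_or_eq_one_of_zmod_two (a : ZMod 2) : a = 0 ∨ a = 1 := by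
  revert a
  decide

variable {n : ℕ}

theorem eval_indic_self (c : Fin n → ZMod 2) : eval c (indic c) = 1 := by
  rw [indic, map_prod]
  refine Finset.prod_eq_one fun i _ => ?_
  rcases eq_zero_or_eq_one_of_zmod_two (c i) with h | h <;> simp [h]

theorem psmPrime_le_ker_eval {α : Fin n → Option (ZMod 2)} {c : Fin n → ZMod 2}
    (hc : c ∈ intervalOf α) : psmPrime α ≤ RingHom.ker (eval c) := by
  rw [psmPrime, Ideal.span_le]
  rintro _ (⟨i, hαi, rfl⟩ | ⟨i, hαi, rfl⟩) <;> simp [hc i _ hαi]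

theorem indic_mem_psmPrime_iff {α : Fin n → Option (ZMod 2)} {c : Fin n → ZMod 2} :
    indic c ∈ psmPrime α ↔ c ∉ intervalOf α := by
  constructor
  · intro hmem hc
    simpa [eval_indic_self] using psmPrime_le_ker_eval hc hmem
  · intro hc
    simp only [intervalOf, Set.mem_ofPred_eq, not_forall] at hc
    obtain ⟨i, a, hαi, hne⟩ := hc
    have hdvd : (if c i = 1 then X i else 1 - X i) ∣ indic c :=
      Finset.dvd_prod_of_mem _ (Finset.mem_univ i)
    refine (psmPrime α).mem_of_dvd hdvd (Ideal.subset_span ?_)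
    rcases eq_zero_or_eq_one_of_zmod_two a with rfl | rfl
    · have hci : c i = 1 := (eq_zero_or_eq_one_of_zmod_two (c i)).resolve_left hne
      exact Or.inl ⟨i, hαi, if_pos hci⟩
    · exact Or.inr ⟨i, hαi, if_neg hne⟩

theorem neuralIdeal_le_psmPrime_iff {n : ℕ} (C : Set (Fin n → ZMod 2))
    (α : Fin n → Option (ZMod 2)) :
    neuralIdeal C ≤ psmPrime α ↔ intervalOf α ⊆ C := by
  rw [neuralIdeal, Ideal.span_le]
  constructor
  · intro h c hc
    by_contra hcC
    exact indic_mem_psmPrime_iff.1 (h ⟨c, hcC, rfl⟩) hc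
  · rintro h _ ⟨c, hcC, rfl⟩
    exact indic_mem_psmPrime_iff.2 fun hc => hcC (h hc)
end
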